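/- arXiv:1301.0758 — 8 statements merged into one kernel-verified Lean document; each statement's English description precedes it below -/
import Mathlib

section
/- Let a, b, c be integers with a ≠ 0, and let g(x) = a·x² + b·x + c. Then g has two integer zeros if and only if the following conditions hold: b² - 4ac = k² for some integer k, and a divides b, and a divides c. -/
/-!
Comparing coefficients in `a (x - r₁) (x - r₂)` gives `b = -a (r₁ + r₂)`, `c = a r₁ r₂` and
discriminant `(a (r₁ - r₂))²`. Conversely, writing `b = a b'`, `c = a c'`, the discriminant is
`a² (b'² - 4c')`; since `ℤ` is integrally closed, `b'² - 4c'` is itself a square `m²`, and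
`m ≡ b' (mod 2)`, so `x² + b'x + c'` has the integer roots `(-b' ± m) / 2`.
-/

theorem exists_eq_sq_of_sq_mul_eq_sq {R : Type*} [CommRing R] [IsDomain R] [IsIntegrallyClosed R]
    {a d k : R} (ha : a ≠ 0) (h : a ^ 2 * d = k ^ 2) : ∃ m, d = m ^ 2 := by
  obtain ⟨m, rfl⟩ : a ∣ k := (IsIntegrallyClosed.pow_dvd_pow_iff two_ne_zero).mp ⟨d, h.symm⟩
  exact ⟨m, mul_left_cancel₀ (pow_ne_zero 2 ha) (by rw [h]; ring)⟩

theorem Int.even_add_of_sq_sub_four_mul_eq_sq {b c m : ℤ} (h : b ^ 2 - 4 * c = m ^ 2) :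
    Even (b + m) := by
  have hsq : Even (b ^ 2) ↔ Even (m ^ 2) := by
    rw [← h, Int.even_sub]
    simp [show Even (4 * c) from ⟨2 * c, by ring⟩]
  simpa [Int.even_add, Int.even_pow] using hsq

theorem Int.exists_monic_quadratic_eq_mul_of_discrim_eq_sq {b c m : ℤ}
    (h : b ^ 2 - 4 * c = m ^ 2) :
    ∃ r₁ r₂ : ℤ, ∀ x : ℤ, x ^ 2 + b * x + c = (x - r₁) * (x - r₂) := by
  obtain ⟨t, ht⟩ := Int.even_add_of_sq_sub_four_mul_eq_sq h
  have hc : c = t * b - t ^ 2 := by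
    rw [show m = 2 * t - b by linarith] at h
    linarith
  exact ⟨t - b, -t, fun x => by rw [hc]; ring⟩

theorem quadratic_coeffs_of_eq_mul {R : Type*} [CommRing R] {a b c r₁ r₂ : R}
    (h : ∀ x : R, a * x ^ 2 + b * x + c = a * (x - r₁) * (x - r₂)) :
    b = -(a * (r₁ + r₂)) ∧ c = a * (r₁ * r₂) := by
  have h₀ := h 0
  have h₁ := h 1
  exact ⟨by linear_combination h₁ - h₀, by linear_combination h₀⟩

/-- A quadratic trinomial `a*x^2 + b*x + c` with integer coefficients (`a ≠ 0`) has two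
integer zeros if and only if `b^2 - 4*a*c` is an integer square, `a ∣ b`, and `a ∣ c`. -/
theorem quadratic_two_integer_roots_iff
    (a b c : ℤ) (ha : a ≠ 0) :
    (∃ r₁ r₂ : ℤ, ∀ x : ℤ, a * x ^ 2 + b * x + c = a * (x - r₁) * (x - r₂)) ↔
    ((∃ k : ℤ, b ^ 2 - 4 * a * c = k ^ 2) ∧ a ∣ b ∧ a ∣ c) := by
  constructor
  · rintro ⟨r₁, r₂, h⟩
    obtain ⟨rfl, rfl⟩ := quadratic_coeffs_of_eq_mul h
    exact ⟨⟨a * (r₁ - r₂), by ring⟩, ⟨-(r₁ + r₂), by ring⟩, dvd_mul_right a _⟩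
  · rintro ⟨⟨k, hk⟩, ⟨b, rfl⟩, ⟨c, rfl⟩⟩
    obtain ⟨m, hm⟩ := exists_eq_sq_of_sq_mul_eq_sq ha (d := b ^ 2 - 4 * c) (by rw [← hk]; ring)
    obtain ⟨r₁, r₂, h⟩ := Int.exists_monic_quadratic_eq_mul_of_discrim_eq_sq hm
    exact ⟨r₁, r₂, fun x => by linear_combination a * h x⟩
end

section
/- Let a, b, c be integers with a² - ab + c > 0, and suppose a² - ab + c is not a perfect square. Then the number of integral points on the graph of f(x) = (x² + bx + c)/(x + a) is exactly 4N, where N is the number of positive divisors of a² - ab + c that do not exceed √(a² - ab + c). -/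
/-!
Since `x² + b x + c = (x + a)(x - a + b) + M` with `M = a² - a b + c`, an integer `x ≠ -a` gives an
integer value `y` exactly when `(x + a)(y - x + a - b) = M`. The integral points therefore
correspond to the ordered factorisations `M = u v` over `ℤ`, of which there are twice as many as
positive divisors of `M`. As `M` is not a square, `d ↦ M / d` exchanges the positive divisors
below `√M` with those above it, so there are `2N` positive divisors.
-/

open Finset

def graphIntegralPoints (a b c : ℤ) : Set (ℤ × ℤ) :=
  {p | p.1 ≠ -a ∧
    (p.2 : ℝ) = ((p.1 : ℝ) ^ 2 + (b : ℝ) * (p.1 : ℝ) + (c : ℝ)) / ((p.1 : ℝ) + (a : ℝ))}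

theorem graph_eq_iff_mul_eq {a b c x y : ℤ} (hx : x ≠ -a) :
    (y : ℝ) = ((x : ℝ) ^ 2 + b * x + c) / (x + a) ↔
      (x + a) * (y - x + a - b) = a ^ 2 - a * b + c := by
  have hxa : (x : ℝ) + a ≠ 0 := by exact_mod_cast (add_eq_zero_iff_eq_neg.not.2 hx)
  rw [eq_div_iff hxa, ← @Int.cast_inj ℝ]
  push_cast
  constructor <;> intro h <;> linear_combination h

def toDivisorPair (a b : ℤ) (p : ℤ × ℤ) : ℤ × ℤ := (p.1 + a, p.2 - p.1 + a - b)

theorem toDivisorPair_bijective (a b : ℤ) : (toDivisorPair a b).Bijective := by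
  refine ⟨fun p q h => ?_, fun q => ⟨(q.1 - a, q.2 + q.1 - 2 * a + b), ?_⟩⟩
  · simp only [toDivisorPair, Prod.mk.injEq] at h
    ext <;> omega
  · simp only [toDivisorPair]
    ext <;> ring

theorem graphIntegralPoints_eq_preimage {a b c : ℤ} (hM : a ^ 2 - a * b + c ≠ 0) :
    graphIntegralPoints a b c = toDivisorPair a b ⁻¹' (a ^ 2 - a * b + c).divisorsAntidiag := by
  ext ⟨x, y⟩
  simp only [graphIntegralPoints, toDivisorPair, Set.mem_preimage, mem_coe,
    Int.prodMk_mem_divisorsAntidiag hM, Set.mem_ofPred_eq]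
  constructor
  · rintro ⟨hx, hy⟩
    exact (graph_eq_iff_mul_eq hx).1 hy
  · intro h
    have hx : x ≠ -a := by rintro rfl; rw [neg_add_cancel, zero_mul] at h; exact hM h.symm
    exact ⟨hx, (graph_eq_iff_mul_eq hx).2 h⟩

theorem ncard_graphIntegralPoints {a b c : ℤ} (hM : a ^ 2 - a * b + c ≠ 0) :
    (graphIntegralPoints a b c).ncard = #(a ^ 2 - a * b + c).divisorsAntidiag := by
  rw [graphIntegralPoints_eq_preimage hM, Set.ncard_preimage_of_injective_subset_range
    (toDivisorPair_bijective a b).1 (by simp [(toDivisorPair_bijective a b).2.range_eq]),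
    Set.ncard_coe_finset]

theorem Int.card_divisors (z : ℤ) : #z.divisors = 2 * #z.natAbs.divisors := by
  rw [Int.divisors, card_disjUnion, card_map, card_map, two_mul]

theorem Int.card_divisorsAntidiag (z : ℤ) : #z.divisorsAntidiag = #z.divisors := by
  rw [← Int.image_fst_divisorsAntidiag, card_image_of_injOn]
  rintro ⟨x, y⟩ hxy ⟨x', y'⟩ hxy' (rfl : x = x')
  simp only [mem_coe, Int.mem_divisorsAntidiag] at hxy hxy'
  have hx : x ≠ 0 := by rintro rfl; exact hxy.2 (hxy.1.symm.trans (zero_mul y))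
  simp only [Prod.mk.injEq, true_and]
  exact mul_left_cancel₀ hx (hxy.1.trans hxy'.1.symm)

theorem Nat.le_sqrt_iff_not_div_le_sqrt {n d : ℕ} (hn : ¬ IsSquare n) (hd : d ∣ n) :
    d ≤ n.sqrt ↔ ¬ n / d ≤ n.sqrt := by
  obtain ⟨e, rfl⟩ := hd
  have hde : d ≠ e := by rintro rfl; exact hn ⟨d, rfl⟩
  rcases Nat.eq_zero_or_pos d with rfl | hd0
  · exact absurd ⟨0, by simp⟩ hn
  rw [Nat.mul_div_cancel_left _ hd0, Nat.le_sqrt, Nat.le_sqrt, not_le]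
  rcases Nat.lt_or_gt_of_ne hde with h | h
  · constructor <;> intro <;> nlinarith
  · constructor <;> intro <;> nlinarith

theorem Nat.card_divisors_eq_two_mul_card_le_sqrt {n : ℕ} (hn : ¬ IsSquare n) :
    #n.divisors = 2 * #{d ∈ n.divisors | d ≤ n.sqrt} := by
  have hn0 : n ≠ 0 := by rintro rfl; exact hn ⟨0, rfl⟩
  have hcompl : #{d ∈ n.divisors | ¬ d ≤ n.sqrt} = #{d ∈ n.divisors | d ≤ n.sqrt} := by
    refine Finset.card_nbij' (n / ·) (n / ·) ?_ ?_ ?_ ?_ <;> intro d hd <;>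
      simp only [coe_filter, Set.mem_ofPred_eq, Nat.mem_divisors] at hd ⊢
    · refine ⟨⟨Nat.div_dvd_of_dvd hd.1.1, hn0⟩, ?_⟩
      rw [Nat.le_sqrt_iff_not_div_le_sqrt hn (Nat.div_dvd_of_dvd hd.1.1),
        Nat.div_div_self hd.1.1 hn0]
      exact hd.2
    · exact ⟨⟨Nat.div_dvd_of_dvd hd.1.1, hn0⟩,
        (Nat.le_sqrt_iff_not_div_le_sqrt hn hd.1.1).1 hd.2⟩
    · exact Nat.div_div_self hd.1.1 hn0
    · exact Nat.div_div_self hd.1.1 hn0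
  rw [← card_filter_add_card_filter_not (· ≤ n.sqrt), hcompl, two_mul]

theorem Real.natCast_le_sqrt_iff {m n : ℕ} : (m : ℝ) ≤ √(n : ℝ) ↔ m ≤ n.sqrt := by
  rw [← Real.nat_floor_real_sqrt_eq_nat_sqrt, Nat.le_floor_iff (Real.sqrt_nonneg _)]

theorem Int.ncard_setOf_pos_dvd_le_sqrt (n : ℕ) :
    {d : ℤ | 0 < d ∧ d ∣ n ∧ (d : ℝ) ≤ √(n : ℝ)}.ncard = #{d ∈ n.divisors | d ≤ n.sqrt} := by
  rw [← Set.ncard_coe_finset, ← Set.ncard_image_of_injective _ (Nat.cast_injective (R := ℤ))]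
  congr 1
  ext d
  simp only [Set.mem_ofPred_eq, Set.mem_image, coe_filter, Nat.mem_divisors]
  constructor
  · rintro ⟨hd0, hdvd, hd⟩
    lift d to ℕ using hd0.le
    rw [Int.cast_natCast, Real.natCast_le_sqrt_iff] at hd
    rw [Int.natCast_dvd_natCast] at hdvd
    have hn : n ≠ 0 := by rintro rfl; rw [Nat.sqrt_zero] at hd; omega
    exact ⟨d, ⟨⟨hdvd, hn⟩, hd⟩, rfl⟩
  · rintro ⟨d, ⟨⟨hdvd, hn⟩, hd⟩, rfl⟩
    refine ⟨?_, Int.natCast_dvd_natCast.2 hdvd, ?_⟩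
    · exact_mod_cast Nat.pos_of_dvd_of_pos hdvd (Nat.pos_of_ne_zero hn)
    · rwa [Int.cast_natCast, Real.natCast_le_sqrt_iff]

/-- If `a^2 - a*b + c > 0` is not a perfect square, the graph of
`f(x) = (x^2 + b*x + c)/(x + a)` contains exactly `4N` integral points, where `N` is the
number of positive divisors of `a^2 - a*b + c` not exceeding `√(a^2 - a*b + c)`. -/
theorem card_integral_points_pos_nonsquare
    (a b c : ℤ) (h : 0 < a ^ 2 - a * b + c)
    (hns : ¬ ∃ k : ℤ, a ^ 2 - a * b + c = k ^ 2) :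
    Set.ncard {p : ℤ × ℤ | p.1 ≠ -a ∧
        (p.2 : ℝ) = ((p.1 : ℝ) ^ 2 + (b : ℝ) * (p.1 : ℝ) + (c : ℝ)) / ((p.1 : ℝ) + (a : ℝ))}
      = 4 * Set.ncard {d : ℤ | 0 < d ∧ d ∣ (a ^ 2 - a * b + c) ∧
          (d : ℝ) ≤ Real.sqrt ((a ^ 2 - a * b + c : ℤ) : ℝ)} := by
  change (graphIntegralPoints a b c).ncard = _
  obtain ⟨n, hn⟩ := Int.eq_ofNat_of_zero_le h.le
  have hsq : ¬ IsSquare n := by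
    rintro ⟨r, rfl⟩
    exact hns ⟨r, by rw [hn]; push_cast; ring⟩
  rw [ncard_graphIntegralPoints h.ne', Int.card_divisorsAntidiag, Int.card_divisors, hn,
    Int.natAbs_natCast, Nat.card_divisors_eq_two_mul_card_le_sqrt hsq, Int.cast_natCast,
    Int.ncard_setOf_pos_dvd_le_sqrt]
  ring
end

section
/- Let a, b, c be integers with a² - ab + c > 0, and suppose a² - ab + c = k² for some positive integer k. Then the number of integral points on the graph of f(x) = (x² + bx + c)/(x + a) is exactly 4N - 2, where N is the number of positive divisors of a² - ab + c that do not exceed √(a² - ab + c). -/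
-- aux: for a perfect square kn^2, twice the number of divisors ≤ kn equals τ + 1
theorem aux_div_count (kn : ℕ) (hkn : 0 < kn) :
    ((kn*kn).divisors.filter (fun n => n ≤ kn)).card * 2 = (kn*kn).divisors.card + 1 := by
  set mn := kn * kn with hmn
  have hmn0 : mn ≠ 0 := by positivity
  set A := mn.divisors.filter (fun n => n ≤ kn) with hA
  set B := mn.divisors.filter (fun n => kn ≤ n) with hB
  have hcard : A.card = B.card := by
    apply Finset.card_bij' (fun n _ => mn / n) (fun n _ => mn / n)
    · intro n hn
      simp only [hA, hB, Finset.mem_filter, Nat.mem_divisors] at hn ⊢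
      obtain ⟨⟨hd, -⟩, hle⟩ := hn
      have hn0 : 0 < n := Nat.pos_of_dvd_of_pos hd (Nat.pos_of_ne_zero hmn0)
      refine ⟨⟨Nat.div_dvd_of_dvd hd, hmn0⟩, ?_⟩
      rw [Nat.le_div_iff_mul_le hn0]
      calc kn * n ≤ kn * kn := Nat.mul_le_mul_left _ hle
        _ = mn := rfl
    · intro n hn
      simp only [hA, hB, Finset.mem_filter, Nat.mem_divisors] at hn ⊢
      obtain ⟨⟨hd, -⟩, hle⟩ := hn
      have hn0 : 0 < n := Nat.pos_of_dvd_of_pos hd (Nat.pos_of_ne_zero hmn0)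
      refine ⟨⟨Nat.div_dvd_of_dvd hd, hmn0⟩, ?_⟩
      calc mn / n ≤ (kn * n) / n := Nat.div_le_div_right (by
              rw [hmn]; exact Nat.mul_le_mul_left _ hle)
        _ = kn := Nat.div_eq_of_eq_mul_left hn0 rfl
    · intro n hn
      simp only [hA, Finset.mem_filter, Nat.mem_divisors] at hn
      exact Nat.div_div_self hn.1.1 hmn0
    · intro n hn
      simp only [hB, Finset.mem_filter, Nat.mem_divisors] at hn
      exact Nat.div_div_self hn.1.1 hmn0
  have hunion : A ∪ B = mn.divisors := by
    ext n
    simp only [hA, hB, Finset.mem_union, Finset.mem_filter]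
    constructor
    · rintro (⟨h1, -⟩ | ⟨h1, -⟩) <;> exact h1
    · intro h1
      rcases le_total n kn with h' | h'
      exacts [Or.inl ⟨h1, h'⟩, Or.inr ⟨h1, h'⟩]
  have hinter : A ∩ B = {kn} := by
    ext n
    simp only [hA, hB, Finset.mem_inter, Finset.mem_filter, Finset.mem_singleton,
      Nat.mem_divisors]
    constructor
    · rintro ⟨⟨-, h1⟩, -, h2⟩; omega
    · intro hnk
      have hd : n ∣ mn := by rw [hnk, hmn]; exact dvd_mul_right kn kn
      exact ⟨⟨⟨hd, hmn0⟩, le_of_eq hnk⟩, ⟨hd, hmn0⟩, le_of_eq hnk.symm⟩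
  have := Finset.card_union_add_card_inter A B
  rw [hunion, hinter, Finset.card_singleton, ← hcard] at this
  omega

/-- If `a^2 - a*b + c = k^2` for a positive integer `k`, the graph of
`f(x) = (x^2 + b*x + c)/(x + a)` contains exactly `4N - 2` integral points, where `N` is the
number of positive divisors of `a^2 - a*b + c` not exceeding `√(a^2 - a*b + c)`. -/
theorem card_integral_points_pos_square
    (a b c : ℤ) (h : 0 < a ^ 2 - a * b + c)
    (hsq : ∃ k : ℤ, 0 < k ∧ a ^ 2 - a * b + c = k ^ 2) :
    Set.ncard {p : ℤ × ℤ | p.1 ≠ -a ∧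
        (p.2 : ℝ) = ((p.1 : ℝ) ^ 2 + (b : ℝ) * (p.1 : ℝ) + (c : ℝ)) / ((p.1 : ℝ) + (a : ℝ))}
      = 4 * Set.ncard {d : ℤ | 0 < d ∧ d ∣ (a ^ 2 - a * b + c) ∧
          (d : ℝ) ≤ Real.sqrt ((a ^ 2 - a * b + c : ℤ) : ℝ)} - 2 := by
  obtain ⟨k, hk, hmk⟩ := hsq
  set m : ℤ := a ^ 2 - a * b + c with hm_def
  have hm0 : m ≠ 0 := h.ne'
  have hsqrt : Real.sqrt ((m : ℤ) : ℝ) = (k : ℝ) := by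
    rw [show ((m : ℤ) : ℝ) = (k : ℝ) ^ 2 by exact_mod_cast hmk,
      Real.sqrt_sq (by exact_mod_cast hk.le)]
  -- the set of integral points is the image of the divisors of m
  have hS : {p : ℤ × ℤ | p.1 ≠ -a ∧
        (p.2 : ℝ) = ((p.1 : ℝ) ^ 2 + (b : ℝ) * (p.1 : ℝ) + (c : ℝ)) / ((p.1 : ℝ) + (a : ℝ))}
      = (fun t : ℤ => (t - a, t + (b - 2*a) + m / t)) '' {t : ℤ | t ∣ m} := by
    ext ⟨x, y⟩
    simp only [Set.mem_setOf_eq, Set.mem_image, Prod.mk.injEq]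
    constructor
    · rintro ⟨hx, hy⟩
      have hxa : ((x : ℝ) + (a : ℝ)) ≠ 0 := by
        intro hz
        apply hx
        have : ((x + a : ℤ) : ℝ) = 0 := by push_cast; linarith
        have : x + a = 0 := by exact_mod_cast this
        omega
      rw [eq_div_iff hxa] at hy
      have hZ : y * (x + a) = x ^ 2 + b * x + c := by exact_mod_cast hy
      have hdvd : (x + a) ∣ m := ⟨y - x - b + a, by rw [hm_def]; linear_combination -hZ⟩
      refine ⟨x + a, hdvd, by ring, ?_⟩
      obtain ⟨q, hq⟩ := hdvd
      have hxa0 : x + a ≠ 0 := fun hz => hx (by omega)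
      rw [hq, Int.mul_ediv_cancel_left _ hxa0]
      have hqq : (x + a) * q = (x + a) * (y - x - b + a) := by
        linear_combination -hq + hm_def - hZ
      have := mul_left_cancel₀ hxa0 hqq
      omega
    · rintro ⟨t, ht, hx, hy⟩
      have ht0 : t ≠ 0 := by rintro rfl; exact hm0 (zero_dvd_iff.mp ht)
      have hx' : x = t - a := hx.symm
      have hy' : y = t + (b - 2*a) + m / t := hy.symm
      have htm : t * (m / t) = m := Int.mul_ediv_cancel' ht
      constructor
      · omega
      · have hxa : ((x : ℝ) + (a : ℝ)) ≠ 0 := by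
          intro hz
          have : ((x + a : ℤ) : ℝ) = 0 := by push_cast; linarith
          have : x + a = 0 := by exact_mod_cast this
          omega
        rw [eq_div_iff hxa]
        have hZ : y * (x + a) = x ^ 2 + b * x + c := by
          subst hx' hy'
          linear_combination htm + hm_def
        exact_mod_cast hZ
  have hinj : Set.InjOn (fun t : ℤ => (t - a, t + (b - 2*a) + m / t)) {t : ℤ | t ∣ m} := by
    intro t1 _ t2 _ hteq
    have := congrArg Prod.fst hteq
    simp only at this
    omega
  rw [hS, Set.ncard_image_of_injOn hinj]
  -- rewrite both sets as finsets
  have hmtn : m.toNat ≠ 0 := by omega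
  have hT : {t : ℤ | t ∣ m}
      = ↑((m.toNat.divisors.image (fun n : ℕ => (n : ℤ))) ∪
          (m.toNat.divisors.image (fun n : ℕ => -(n : ℤ)))) := by
    ext t
    simp only [Set.mem_setOf_eq, Finset.coe_union, Set.mem_union, Finset.coe_image,
      Set.mem_image, Finset.mem_coe, Nat.mem_divisors]
    constructor
    · intro ht
      have ht0 : t ≠ 0 := by rintro rfl; exact hm0 (zero_dvd_iff.mp ht)
      have hd : t.natAbs ∣ m.toNat := by
        rw [show m.toNat = m.natAbs by omega]
        exact Int.natAbs_dvd_natAbs.mpr ht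
      rcases lt_or_gt_of_ne ht0 with hlt | hgt
      · exact Or.inr ⟨t.natAbs, ⟨hd, hmtn⟩, by omega⟩
      · exact Or.inl ⟨t.natAbs, ⟨hd, hmtn⟩, by omega⟩
    · rintro (⟨n, ⟨hn, -⟩, rfl⟩ | ⟨n, ⟨hn, -⟩, rfl⟩)
      · have := Int.natCast_dvd_natCast.mpr hn
        rwa [Int.toNat_of_nonneg h.le] at this
      · rw [neg_dvd]
        have := Int.natCast_dvd_natCast.mpr hn
        rwa [Int.toNat_of_nonneg h.le] at this
  have hD : {d : ℤ | 0 < d ∧ d ∣ m ∧ (d : ℝ) ≤ Real.sqrt ((m : ℤ) : ℝ)}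
      = ↑((m.toNat.divisors.filter (fun n => n ≤ k.toNat)).image (fun n : ℕ => (n : ℤ))) := by
    ext d
    simp only [hsqrt, Set.mem_setOf_eq, Finset.coe_image, Set.mem_image, Finset.mem_coe,
      Finset.mem_filter, Nat.mem_divisors]
    constructor
    · rintro ⟨hd0, hdvd, hle⟩
      have hle' : d ≤ k := by exact_mod_cast hle
      refine ⟨d.toNat, ⟨⟨?_, hmtn⟩, by omega⟩, by omega⟩
      rw [show d.toNat = d.natAbs by omega, show m.toNat = m.natAbs by omega]
      exact Int.natAbs_dvd_natAbs.mpr hdvd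
    · rintro ⟨n, ⟨⟨hn, -⟩, hnk⟩, rfl⟩
      have hn0 : n ≠ 0 := by rintro rfl; exact hmtn (Nat.eq_zero_of_zero_dvd hn)
      refine ⟨by exact_mod_cast Nat.pos_of_ne_zero hn0, ?_, ?_⟩
      · have := Int.natCast_dvd_natCast.mpr hn
        rwa [Int.toNat_of_nonneg h.le] at this
      · exact_mod_cast (show (n : ℤ) ≤ k by omega)
  rw [hT, hD, Set.ncard_coe_finset, Set.ncard_coe_finset]
  -- cardinalities
  have hdisj : Disjoint (m.toNat.divisors.image (fun n : ℕ => (n : ℤ)))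
      (m.toNat.divisors.image (fun n : ℕ => -(n : ℤ))) := by
    rw [Finset.disjoint_left]
    rintro x hx hx'
    simp only [Finset.mem_image, Nat.mem_divisors] at hx hx'
    obtain ⟨n, ⟨hn, -⟩, rfl⟩ := hx
    obtain ⟨n', ⟨hn', -⟩, he⟩ := hx'
    have : n ≠ 0 := by rintro rfl; exact hmtn (Nat.eq_zero_of_zero_dvd hn)
    have : n' ≠ 0 := by rintro rfl; exact hmtn (Nat.eq_zero_of_zero_dvd hn')
    omega
  rw [Finset.card_union_of_disjoint hdisj,
    Finset.card_image_of_injective _ (Nat.cast_injective : Function.Injective (fun n : ℕ => (n : ℤ))),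
    Finset.card_image_of_injective _ (fun x y hxy => by exact_mod_cast neg_injective hxy : Function.Injective (fun n : ℕ => -(n : ℤ))),
    Finset.card_image_of_injective _ (Nat.cast_injective : Function.Injective (fun n : ℕ => (n : ℤ)))]
  have hmn : m.toNat = k.toNat * k.toNat := by
    have : (m.toNat : ℤ) = (k.toNat : ℤ) * (k.toNat : ℤ) := by
      rw [Int.toNat_of_nonneg h.le, Int.toNat_of_nonneg hk.le, hmk]; ring
    exact_mod_cast this
  have hkey := aux_div_count k.toNat (by omega)
  rw [← hmn] at hkey
  omega
end

section
/- Let a, b, c be integers with a² - ab + c < 0. Then the set of integral points on the graph of f(x) = (x² + bx + c)/(x + a) is exactly the set of all pairs of one of the four forms (-a + d₁, b - 2a + (d₁ - d₂)), (-a - d₂, b - 2a + (d₁ - d₂)), (-a + d₂, b - 2a - (d₁ - d₂)), (-a - d₁, b - 2a - (d₁ - d₂)), where d₁, d₂ range over pairs of positive integers with 1 ≤ d₂ ≤ d₁ and d₁·d₂ = |a² - ab + c|. -/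
/-- If `a^2 - a*b + c < 0`, the set of integral points on the graph of
`f(x) = (x^2 + b*x + c)/(x + a)` consists exactly of the points
`(-a + d₁, b - 2a + (d₁ - d₂))`, `(-a - d₂, b - 2a + (d₁ - d₂))`,
`(-a + d₂, b - 2a - (d₁ - d₂))`, `(-a - d₁, b - 2a - (d₁ - d₂))`,
for `1 ≤ d₂ ≤ d₁` with `d₁ * d₂ = |a^2 - a*b + c|`. -/
theorem integral_points_of_neg_case
    (a b c : ℤ) (h : a ^ 2 - a * b + c < 0) :
    {p : ℤ × ℤ | p.1 ≠ -a ∧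
        (p.2 : ℝ) = ((p.1 : ℝ) ^ 2 + (b : ℝ) * (p.1 : ℝ) + (c : ℝ)) / ((p.1 : ℝ) + (a : ℝ))}
      = {p : ℤ × ℤ | ∃ d₁ d₂ : ℤ, 1 ≤ d₂ ∧ d₂ ≤ d₁ ∧ d₁ * d₂ = |a ^ 2 - a * b + c| ∧
          (p = (-a + d₁, b - 2 * a + (d₁ - d₂)) ∨
           p = (-a - d₂, b - 2 * a + (d₁ - d₂)) ∨
           p = (-a + d₂, b - 2 * a - (d₁ - d₂)) ∨
           p = (-a - d₁, b - 2 * a - (d₁ - d₂)))} := by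
  have habs : |a ^ 2 - a * b + c| = -(a ^ 2 - a * b + c) := abs_of_neg h
  ext ⟨x, y⟩
  simp only [Set.mem_setOf_eq, ne_eq, Prod.mk.injEq]
  constructor
  · rintro ⟨hx, heq⟩
    have hxa : (x : ℝ) + (a : ℝ) ≠ 0 := by
      intro h0
      apply hx
      have : (x : ℝ) = (-a : ℤ) := by push_cast; linarith
      exact_mod_cast this
    rw [eq_div_iff hxa] at heq
    have hZ : y * (x + a) = x ^ 2 + b * x + c := by exact_mod_cast heq
    have key : (x + a) * (y - x - b + a) = a ^ 2 - a * b + c := by linarith [hZ]; 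
    set t : ℤ := x + a with ht
    set s : ℤ := y - x - b + a with hs
    have ht0 : t ≠ 0 := by
      intro h0; apply hx; omega
    have hts : t * s = a ^ 2 - a * b + c := key
    rcases lt_or_gt_of_ne ht0 with htn | htp
    · -- t < 0, s > 0
      have hsp : 0 < s := by nlinarith
      rcases le_or_gt (-t) s with hle | hlt
      · exact ⟨s, -t, by omega, hle, by rw [habs]; linear_combination -hts,
          Or.inr (Or.inl ⟨by omega, by omega⟩)⟩
      · exact ⟨-t, s, by omega, by omega, by rw [habs]; linear_combination -hts,
          Or.inr (Or.inr (Or.inr ⟨by omega, by omega⟩))⟩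
    · -- t > 0, s < 0
      have hsn : s < 0 := by nlinarith
      rcases le_or_gt (-s) t with hle | hlt
      · exact ⟨t, -s, by omega, hle, by rw [habs]; linear_combination -hts,
          Or.inl ⟨by omega, by omega⟩⟩
      · exact ⟨-s, t, by omega, by omega, by rw [habs]; linear_combination -hts,
          Or.inr (Or.inr (Or.inl ⟨by omega, by omega⟩))⟩
  · rintro ⟨d₁, d₂, h1, h2, h3, hc⟩
    rw [habs] at h3
    have h2' : 1 ≤ d₁ := le_trans h1 h2
    have h1R : (1:ℝ) ≤ (d₂:ℝ) := by exact_mod_cast h1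
    have h2R : (d₂:ℝ) ≤ (d₁:ℝ) := by exact_mod_cast h2
    have h3R : (d₁:ℝ) * (d₂:ℝ) = -((a:ℝ) ^ 2 - (a:ℝ) * (b:ℝ) + (c:ℝ)) := by
      exact_mod_cast h3
    rcases hc with ⟨hx, hy⟩ | ⟨hx, hy⟩ | ⟨hx, hy⟩ | ⟨hx, hy⟩ <;> subst hx <;> subst hy <;>
      refine ⟨by omega, ?_⟩ <;>
      rw [eq_div_iff (by push_cast; intro h0; linarith)] <;>
      push_cast <;> linear_combination -h3R
end

section
/- Let a, b, c be integers with a² - ab + c < 0, and suppose |a² - ab + c| is not a perfect square. Then the number of integral points on the graph of f(x) = (x² + bx + c)/(x + a) is exactly 4N, where N is the number of positive divisors of |a² - ab + c| that do not exceed √|a² - ab + c|. -/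
/-!
Write `m = a² - ab + c`. Since `x² + bx + c = (x + a)(x - a + b) + m`, the integral points
`(x, y)` are in bijection with the factorisations `m = t * k` over `ℤ`, via `t = x + a` and
`k = y - x + a - b`; there are `2 τ(|m|)` of them. As `|m|` is not a square, `d ↦ |m| / d`
exchanges the divisors below `√|m|` with those above it, so `τ(|m|) = 2N`.
-/

open Finset

namespace Nat

theorem mul_self_lt_iff_lt_mul_self_of_mul_eq {d k n : ℕ} (h : d * k = n) (hn : n ≠ 0) :
    k * k < n ↔ n < d * d := by
  have hd : 0 < d := Nat.pos_of_ne_zero (left_ne_zero_of_mul (h ▸ hn))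
  have hk : 0 < k := Nat.pos_of_ne_zero (right_ne_zero_of_mul (h ▸ hn))
  rw [← h, Nat.mul_lt_mul_right hk, Nat.mul_lt_mul_left hd]

theorem card_divisors_eq_two_mul_card_filter_mul_self_lt {n : ℕ} (hn : ¬ IsSquare n) :
    #n.divisors = 2 * #{d ∈ n.divisors | d * d < n} := by
  have hn₀ : n ≠ 0 := by rintro rfl; exact hn ⟨0, rfl⟩
  rw [← card_filter_add_card_filter_not (fun d => d * d < n), two_mul, add_right_inj]
  refine card_nbij' (n / ·) (n / ·) ?_ ?_ ?_ ?_
  · intro d hd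
    simp only [coe_filter, mem_divisors, Set.mem_ofPred_eq] at hd ⊢
    obtain ⟨⟨hdvd, -⟩, hle⟩ := hd
    have hlt : n < d * d := lt_of_le_of_ne (not_lt.mp hle) fun h => hn ⟨d, h⟩
    exact ⟨⟨Nat.div_dvd_of_dvd hdvd, hn₀⟩,
      (mul_self_lt_iff_lt_mul_self_of_mul_eq (Nat.mul_div_cancel' hdvd) hn₀).mpr hlt⟩
  · intro d hd
    simp only [coe_filter, mem_divisors, Set.mem_ofPred_eq] at hd ⊢
    obtain ⟨⟨hdvd, -⟩, hlt⟩ := hd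
    have hgt : n < n / d * (n / d) := (mul_self_lt_iff_lt_mul_self_of_mul_eq
      ((mul_comm _ _).trans (Nat.mul_div_cancel' hdvd)) hn₀).mp hlt
    exact ⟨⟨Nat.div_dvd_of_dvd hdvd, hn₀⟩, hgt.not_gt⟩
  all_goals exact fun d hd => Nat.div_div_self (mem_divisors.mp (mem_filter.mp hd).1).1 hn₀

end Nat

namespace Int

theorem card_divisors_s11 (z : ℤ) : #z.divisors = 2 * #z.natAbs.divisors := by
  simp only [divisors, card_disjUnion, card_map, two_mul]

theorem card_divisorsAntidiag_s11 (z : ℤ) : #z.divisorsAntidiag = #z.divisors := by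
  rw [← image_fst_divisorsAntidiag, card_image_of_injOn]
  rintro ⟨t, k⟩ htk ⟨t', k'⟩ htk' (rfl : t = t')
  simp only [mem_coe, mem_divisorsAntidiag] at htk htk'
  have ht : t ≠ 0 := left_ne_zero_of_mul (htk.1 ▸ htk.2)
  rw [mul_left_cancel₀ ht (htk.1.trans htk'.1.symm)]

end Int

theorem ncard_pos_dvd_le_sqrt_eq_card_filter_mul_self_lt {n : ℕ} (hn : ¬ IsSquare n) :
    Set.ncard {d : ℤ | 0 < d ∧ d ∣ (n : ℤ) ∧ (d : ℝ) ≤ Real.sqrt ((n : ℤ) : ℝ)} =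
      #{d ∈ n.divisors | d * d < n} := by
  have hn₀ : n ≠ 0 := by rintro rfl; exact hn ⟨0, rfl⟩
  have hsq : ∀ d, d * d ≠ n := fun d hd => hn ⟨d, hd.symm⟩
  have hle_sqrt (d : ℕ) : ((d : ℤ) : ℝ) ≤ Real.sqrt ((n : ℤ) : ℝ) ↔ d * d < n := by
    rw [Real.le_sqrt (by positivity) (by positivity), Nat.lt_iff_le_and_ne,
      and_iff_left (hsq d), sq]
    exact_mod_cast Iff.rfl
  have hset : {d : ℤ | 0 < d ∧ d ∣ (n : ℤ) ∧ (d : ℝ) ≤ Real.sqrt ((n : ℤ) : ℝ)} =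
      ((↑) : ℕ → ℤ) '' ↑{d ∈ n.divisors | d * d < n} := by
    ext d
    simp only [Set.mem_ofPred_eq, coe_filter, Set.mem_image, Nat.mem_divisors]
    constructor
    · rintro ⟨hd, hdvd, hle⟩
      lift d to ℕ using hd.le
      exact ⟨d, ⟨⟨Int.natCast_dvd_natCast.mp hdvd, hn₀⟩, (hle_sqrt d).mp hle⟩, rfl⟩
    · rintro ⟨d, ⟨⟨hdvd, -⟩, hlt⟩, rfl⟩
      have hd : d ≠ 0 := by rintro rfl; exact hn₀ (Nat.eq_zero_of_zero_dvd hdvd)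
      exact ⟨by positivity, Int.natCast_dvd_natCast.mpr hdvd, (hle_sqrt d).mpr hlt⟩
  rw [hset, Set.ncard_image_of_injective _ Nat.cast_injective, Set.ncard_coe_finset]

def integralPoints (a b c : ℤ) : Set (ℤ × ℤ) :=
  {p | p.1 ≠ -a ∧ (p.2 : ℝ) = ((p.1 : ℝ) ^ 2 + b * p.1 + c) / (p.1 + a)}

theorem mk_mem_integralPoints_iff {a b c x y : ℤ} (hm : a ^ 2 - a * b + c ≠ 0) :
    (x, y) ∈ integralPoints a b c ↔
      (x + a, y - x + a - b) ∈ (a ^ 2 - a * b + c).divisorsAntidiag := by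
  rw [integralPoints, Set.mem_ofPred_eq, Int.prodMk_mem_divisorsAntidiag hm]
  constructor
  · rintro ⟨hx, hy⟩
    have hxa : x + a ≠ 0 := by omega
    rw [eq_div_iff (by exact_mod_cast hxa)] at hy
    have hy : y * (x + a) = x ^ 2 + b * x + c := by exact_mod_cast hy
    linear_combination hy
  · intro h
    have hxa : x + a ≠ 0 := left_ne_zero_of_mul (h ▸ hm)
    refine ⟨by omega, ?_⟩
    rw [eq_div_iff (by exact_mod_cast hxa)]
    exact_mod_cast (by linear_combination h : y * (x + a) = x ^ 2 + b * x + c)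

theorem ncard_integralPoints {a b c : ℤ} (hm : a ^ 2 - a * b + c ≠ 0) :
    (integralPoints a b c).ncard = #(a ^ 2 - a * b + c).divisorsAntidiag := by
  have hpre : integralPoints a b c =
      (fun p : ℤ × ℤ => (p.1 + a, p.2 - p.1 + a - b)) ⁻¹' ↑(a ^ 2 - a * b + c).divisorsAntidiag :=
    Set.ext fun _ => mk_mem_integralPoints_iff hm
  rw [hpre, Set.ncard_preimage_of_injective_subset_range, Set.ncard_coe_finset]
  · rintro ⟨x, y⟩ ⟨x', y'⟩ h
    simp only [Prod.mk.injEq] at h ⊢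
    omega
  · rintro ⟨t, k⟩ -
    exact ⟨(t - a, k + t - 2 * a + b), by simp only [Prod.mk.injEq]; omega⟩

theorem card_integral_points_neg_nonsquare_general
    (a b c : ℤ)
    (hns : ¬ ∃ k : ℤ, |a ^ 2 - a * b + c| = k ^ 2) :
    Set.ncard {p : ℤ × ℤ | p.1 ≠ -a ∧
        (p.2 : ℝ) = ((p.1 : ℝ) ^ 2 + (b : ℝ) * (p.1 : ℝ) + (c : ℝ)) / ((p.1 : ℝ) + (a : ℝ))}
      = 4 * Set.ncard {d : ℤ | 0 < d ∧ d ∣ |a ^ 2 - a * b + c| ∧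
          (d : ℝ) ≤ Real.sqrt ((|a ^ 2 - a * b + c| : ℤ) : ℝ)} := by
  have hsq : ¬ IsSquare (a ^ 2 - a * b + c).natAbs := by
    rintro ⟨r, hr⟩
    exact hns ⟨r, by rw [← Int.natCast_natAbs, hr]; push_cast; ring⟩
  have hm : a ^ 2 - a * b + c ≠ 0 := fun h => hns ⟨0, by rw [h]; rfl⟩
  rw [← integralPoints, ncard_integralPoints hm, Int.card_divisorsAntidiag_s11, Int.card_divisors_s11,
    Nat.card_divisors_eq_two_mul_card_filter_mul_self_lt hsq, ← Int.natCast_natAbs,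
    ncard_pos_dvd_le_sqrt_eq_card_filter_mul_self_lt hsq]
  ring

/-- If `a^2 - a*b + c < 0` and `|a^2 - a*b + c|` is not a perfect square, the graph of
`f(x) = (x^2 + b*x + c)/(x + a)` contains exactly `4N` integral points, where `N` is the
number of positive divisors of `|a^2 - a*b + c|` not exceeding `√|a^2 - a*b + c|`. -/
theorem card_integral_points_neg_nonsquare
    (a b c : ℤ) (h : a ^ 2 - a * b + c < 0)
    (hns : ¬ ∃ k : ℤ, |a ^ 2 - a * b + c| = k ^ 2) :
    Set.ncard {p : ℤ × ℤ | p.1 ≠ -a ∧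
        (p.2 : ℝ) = ((p.1 : ℝ) ^ 2 + (b : ℝ) * (p.1 : ℝ) + (c : ℝ)) / ((p.1 : ℝ) + (a : ℝ))}
      = 4 * Set.ncard {d : ℤ | 0 < d ∧ d ∣ |a ^ 2 - a * b + c| ∧
          (d : ℝ) ≤ Real.sqrt ((|a ^ 2 - a * b + c| : ℤ) : ℝ)} :=
  card_integral_points_neg_nonsquare_general a b c hns
end

section
/- Let a, b, c be integers and p a prime with a² - ab + c = -p. Then the graph of f(x) = (x² + bx + c)/(x + a) contains exactly four integral points, namely (-a + p, b - 2a + (p - 1)), (-a - 1, b - 2a + (p - 1)), (-a + 1, b - 2a - (p - 1)), and (-a - p, b - 2a - (p - 1)). -/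
lemma aux_real_eq (a b c x y : ℤ) (hx : x ≠ -a) (hy : y * (x + a) = x ^ 2 + b * x + c) :
    (y : ℝ) = ((x : ℝ) ^ 2 + (b : ℝ) * (x : ℝ) + (c : ℝ)) / ((x : ℝ) + (a : ℝ)) := by
  have hxa : (x : ℝ) + (a : ℝ) ≠ 0 := by
    intro h0
    apply hx
    have : ((x + a : ℤ) : ℝ) = 0 := by push_cast; linarith
    have := (Int.cast_eq_zero (α := ℝ)).mp this
    omega
  rw [eq_div_iff hxa]
  exact_mod_cast hy

/-- If `a^2 - a*b + c = -p` for a prime `p`, the graph of `f(x) = (x^2 + b*x + c)/(x + a)`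
contains exactly four integral points. -/
theorem integral_points_of_eq_neg_prime
    (a b c : ℤ) (p : ℕ) (hp : p.Prime) (h : a ^ 2 - a * b + c = -(p : ℤ)) :
    ({q : ℤ × ℤ | q.1 ≠ -a ∧
        (q.2 : ℝ) = ((q.1 : ℝ) ^ 2 + (b : ℝ) * (q.1 : ℝ) + (c : ℝ)) / ((q.1 : ℝ) + (a : ℝ))}
      = ({(-a + (p : ℤ), b - 2 * a + ((p : ℤ) - 1)), (-a - 1, b - 2 * a + ((p : ℤ) - 1)),
          (-a + 1, b - 2 * a - ((p : ℤ) - 1)), (-a - (p : ℤ), b - 2 * a - ((p : ℤ) - 1))}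
          : Set (ℤ × ℤ))) ∧
    Set.ncard {q : ℤ × ℤ | q.1 ≠ -a ∧
        (q.2 : ℝ) = ((q.1 : ℝ) ^ 2 + (b : ℝ) * (q.1 : ℝ) + (c : ℝ)) / ((q.1 : ℝ) + (a : ℝ))}
      = 4 := by
  have h2 : (2 : ℤ) ≤ (p : ℤ) := by exact_mod_cast hp.two_le
  have hset : ({q : ℤ × ℤ | q.1 ≠ -a ∧
        (q.2 : ℝ) = ((q.1 : ℝ) ^ 2 + (b : ℝ) * (q.1 : ℝ) + (c : ℝ)) / ((q.1 : ℝ) + (a : ℝ))}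
      = ({(-a + (p : ℤ), b - 2 * a + ((p : ℤ) - 1)), (-a - 1, b - 2 * a + ((p : ℤ) - 1)),
          (-a + 1, b - 2 * a - ((p : ℤ) - 1)), (-a - (p : ℤ), b - 2 * a - ((p : ℤ) - 1))}
          : Set (ℤ × ℤ))) := by
    ext ⟨x, y⟩
    simp only [Set.mem_setOf_eq, Set.mem_insert_iff, Set.mem_singleton_iff, Prod.mk.injEq]
    constructor
    · rintro ⟨hx, hy⟩
      have hxa : (x : ℝ) + (a : ℝ) ≠ 0 := by
        intro h0
        apply hx
        have : ((x + a : ℤ) : ℝ) = 0 := by push_cast; linarith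
        have := (Int.cast_eq_zero (α := ℝ)).mp this
        omega
      rw [eq_div_iff hxa] at hy
      have hyz : y * (x + a) = x ^ 2 + b * x + c := by exact_mod_cast hy
      have key : (x + a) * (y - (x + a) - (b - 2 * a)) = -(p : ℤ) := by
        linear_combination hyz + h
      have hdvd : (x + a) ∣ (p : ℤ) := by
        rw [← dvd_neg]
        exact ⟨_, key.symm⟩
      have hnat : (x + a).natAbs ∣ p := by
        have := Int.natAbs_dvd_natAbs.mpr hdvd
        simpa using this
      rcases (Nat.dvd_prime hp).mp hnat with h1 | h1
      · rcases Int.natAbs_eq_iff.mp h1 with h1 | h1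
        · -- x + a = 1
          right; right; left
          have : y - 1 - (b - 2 * a) = -(p : ℤ) := by
            have := key; rw [h1] at this; push_cast at this; linarith
          constructor <;> omega
        · -- x + a = -1
          right; left
          have : -(y + 1 - (b - 2 * a)) = -(p : ℤ) := by
            have := key; rw [h1] at this; push_cast at this; linarith
          constructor <;> omega
      · have h1' : (x + a).natAbs = p := h1
        rcases Int.natAbs_eq_iff.mp h1' with h1 | h1
        · -- x + a = p
          left
          have hp0 : (p : ℤ) ≠ 0 := by omega
          have : y - (p : ℤ) - (b - 2 * a) = -1 := by
            have hk := key
            rw [h1] at hk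
            have : (p : ℤ) * (y - (p : ℤ) - (b - 2 * a)) = (p : ℤ) * (-1) := by linarith
            exact mul_left_cancel₀ hp0 this
          constructor <;> omega
        · -- x + a = -p
          right; right; right
          have hp0 : (p : ℤ) ≠ 0 := by omega
          have : y + (p : ℤ) - (b - 2 * a) = 1 := by
            have hk := key
            rw [h1] at hk
            have : (p : ℤ) * (y + (p : ℤ) - (b - 2 * a)) = (p : ℤ) * 1 := by linarith
            exact mul_left_cancel₀ hp0 this
          constructor <;> omega
    · rintro (⟨hx, hy⟩ | ⟨hx, hy⟩ | ⟨hx, hy⟩ | ⟨hx, hy⟩) <;> subst hx <;> subst hy <;>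
        refine ⟨by omega, aux_real_eq a b c _ _ (by omega) (by linear_combination -h)⟩
  refine ⟨hset, ?_⟩
  rw [hset]
  rw [Set.ncard_insert_of_notMem (by simp [Prod.ext_iff]; omega) (Set.toFinite _),
      Set.ncard_insert_of_notMem (by simp [Prod.ext_iff]; omega) (Set.toFinite _),
      Set.ncard_insert_of_notMem (by simp [Prod.ext_iff]; omega) (Set.toFinite _),
      Set.ncard_singleton]
end

section
/- Let a, b, c be integers and p a prime with a² - ab + c = -p². Then the graph of f(x) = (x² + bx + c)/(x + a) contains exactly six integral points, namely (-a + p², b - 2a + (p² - 1)), (-a - 1, b - 2a + (p² - 1)), (-a + 1, b - 2a - (p² - 1)), (-a - p², b - 2a - (p² - 1)), (-a + p, b - 2a), and (-a - p, b - 2a). -/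
/-- If `a^2 - a*b + c = -p^2` for a prime `p`, the graph of `f(x) = (x^2 + b*x + c)/(x + a)`
contains exactly six integral points. -/
theorem integral_points_of_eq_neg_prime_sq
    (a b c : ℤ) (p : ℕ) (hp : p.Prime) (h : a ^ 2 - a * b + c = -(p : ℤ) ^ 2) :
    ({q : ℤ × ℤ | q.1 ≠ -a ∧
        (q.2 : ℝ) = ((q.1 : ℝ) ^ 2 + (b : ℝ) * (q.1 : ℝ) + (c : ℝ)) / ((q.1 : ℝ) + (a : ℝ))}
      = ({(-a + (p : ℤ) ^ 2, b - 2 * a + ((p : ℤ) ^ 2 - 1)),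
          (-a - 1, b - 2 * a + ((p : ℤ) ^ 2 - 1)),
          (-a + 1, b - 2 * a - ((p : ℤ) ^ 2 - 1)),
          (-a - (p : ℤ) ^ 2, b - 2 * a - ((p : ℤ) ^ 2 - 1)),
          (-a + (p : ℤ), b - 2 * a),
          (-a - (p : ℤ), b - 2 * a)} : Set (ℤ × ℤ))) ∧
    Set.ncard {q : ℤ × ℤ | q.1 ≠ -a ∧
        (q.2 : ℝ) = ((q.1 : ℝ) ^ 2 + (b : ℝ) * (q.1 : ℝ) + (c : ℝ)) / ((q.1 : ℝ) + (a : ℝ))}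
      = 6 := by
  have hc : c = a * b - a ^ 2 - (p : ℤ) ^ 2 := by linarith
  have hp1 : (1 : ℤ) ≤ (p : ℤ) := by exact_mod_cast hp.one_le
  have hp' : ((p : ℤ)) ≠ 0 := by linarith
  have hpsq : (1 : ℤ) ≤ (p : ℤ) ^ 2 := by nlinarith
  have hpp : ((p : ℤ)) ^ 2 ≠ 0 := by linarith
  have hxa : ∀ x : ℤ, x ≠ -a → ((x : ℝ) + (a : ℝ)) ≠ 0 := by
    intro x hx h0
    apply hx
    have : ((x : ℝ)) = ((-a : ℤ) : ℝ) := by push_cast; linarith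
    exact_mod_cast this
  have hseteq : ({q : ℤ × ℤ | q.1 ≠ -a ∧
        (q.2 : ℝ) = ((q.1 : ℝ) ^ 2 + (b : ℝ) * (q.1 : ℝ) + (c : ℝ)) / ((q.1 : ℝ) + (a : ℝ))}
      = ({(-a + (p : ℤ) ^ 2, b - 2 * a + ((p : ℤ) ^ 2 - 1)),
          (-a - 1, b - 2 * a + ((p : ℤ) ^ 2 - 1)),
          (-a + 1, b - 2 * a - ((p : ℤ) ^ 2 - 1)),
          (-a - (p : ℤ) ^ 2, b - 2 * a - ((p : ℤ) ^ 2 - 1)),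
          (-a + (p : ℤ), b - 2 * a),
          (-a - (p : ℤ), b - 2 * a)} : Set (ℤ × ℤ))) := by
    ext ⟨x, y⟩
    simp only [Set.mem_setOf_eq, Set.mem_insert_iff, Set.mem_singleton_iff, Prod.mk.injEq]
    constructor
    · rintro ⟨hx, hy⟩
      rw [eq_div_iff (hxa x hx)] at hy
      have hyz : y * (x + a) = x ^ 2 + b * x + c := by exact_mod_cast hy
      have heq : (p : ℤ) ^ 2 = (x + a) * (x + b - a - y) := by linear_combination hyz + hc
      have hna : (x + a).natAbs ∣ p ^ 2 := by
        have h2 := Int.natAbs_dvd_natAbs.mpr ⟨x + b - a - y, heq⟩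
        simpa only [Int.natAbs_pow, Int.natAbs_natCast] using h2
      obtain ⟨i, hi, habs⟩ := (Nat.dvd_prime_pow hp).mp hna
      interval_cases i <;> rcases Int.natAbs_eq_iff.mp habs with hd | hd <;> push_cast at hd
      · -- x + a = 1
        have ht : (1 : ℤ) * (x + b - a - y) = (p : ℤ) ^ 2 := by
          linear_combination -heq - (x + b - a - y) * hd
        exact Or.inr (Or.inr (Or.inl ⟨by linarith, by linarith⟩))
      · -- x + a = -1
        have ht : (-1 : ℤ) * (x + b - a - y) = (p : ℤ) ^ 2 := by
          linear_combination -heq - (x + b - a - y) * hd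
        exact Or.inr (Or.inl ⟨by linarith, by linarith⟩)
      · -- x + a = p
        have ht' : x + b - a - y = (p : ℤ) :=
          mul_left_cancel₀ hp' (by linear_combination -heq - (x + b - a - y) * hd)
        exact Or.inr (Or.inr (Or.inr (Or.inr (Or.inl ⟨by linarith, by linarith⟩))))
      · -- x + a = -p
        have ht' : -(x + b - a - y) = (p : ℤ) :=
          mul_left_cancel₀ hp' (by linear_combination -heq - (x + b - a - y) * hd)
        exact Or.inr (Or.inr (Or.inr (Or.inr (Or.inr ⟨by linarith, by linarith⟩))))
      · -- x + a = p ^ 2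
        have ht' : x + b - a - y = 1 :=
          mul_left_cancel₀ hpp (by linear_combination -heq - (x + b - a - y) * hd)
        exact Or.inl ⟨by linarith, by linarith⟩
      · -- x + a = -p ^ 2
        have ht' : -(x + b - a - y) = 1 :=
          mul_left_cancel₀ hpp (by linear_combination -heq - (x + b - a - y) * hd)
        exact Or.inr (Or.inr (Or.inr (Or.inl ⟨by linarith, by linarith⟩)))
    · have hback : ∀ u v : ℤ, u ≠ -a → v * (u + a) = u ^ 2 + b * u + c →
          (u ≠ -a ∧ (v : ℝ) = ((u : ℝ) ^ 2 + (b : ℝ) * (u : ℝ) + (c : ℝ)) / ((u : ℝ) + (a : ℝ))) := by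
        intro u v hu huv
        refine ⟨hu, ?_⟩
        rw [eq_div_iff (hxa u hu)]
        exact_mod_cast huv
      rintro (⟨hx1, hy1⟩ | ⟨hx1, hy1⟩ | ⟨hx1, hy1⟩ | ⟨hx1, hy1⟩ | ⟨hx1, hy1⟩ | ⟨hx1, hy1⟩) <;>
        subst hx1 <;> subst hy1 <;>
        exact hback _ _
          (by intro hh; omega)
          (by linear_combination -hc)
  refine ⟨hseteq, ?_⟩
  rw [hseteq]
  have hq1 : (1 : ℤ) < (p : ℤ) := by exact_mod_cast hp.one_lt
  have hq2 : (p : ℤ) < (p : ℤ) ^ 2 := by nlinarith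
  set Q := ((p : ℕ) : ℤ) with hQ
  set P := Q ^ 2 with hP
  clear hc h hp' hpsq hpp hp1 hxa hQ hP
  clear_value P Q
  have e1 : ((-a + P, b - 2 * a + (P - 1)) : ℤ × ℤ) ∉
      ({(-a - 1, b - 2 * a + (P - 1)), (-a + 1, b - 2 * a - (P - 1)),
        (-a - P, b - 2 * a - (P - 1)), (-a + Q, b - 2 * a),
        (-a - Q, b - 2 * a)} : Set (ℤ × ℤ)) := by
    simp only [Set.mem_insert_iff, Set.mem_singleton_iff, Prod.mk.injEq]; omega
  have e2 : ((-a - 1, b - 2 * a + (P - 1)) : ℤ × ℤ) ∉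
      ({(-a + 1, b - 2 * a - (P - 1)),
        (-a - P, b - 2 * a - (P - 1)), (-a + Q, b - 2 * a),
        (-a - Q, b - 2 * a)} : Set (ℤ × ℤ)) := by
    simp only [Set.mem_insert_iff, Set.mem_singleton_iff, Prod.mk.injEq]; omega
  have e3 : ((-a + 1, b - 2 * a - (P - 1)) : ℤ × ℤ) ∉
      ({(-a - P, b - 2 * a - (P - 1)), (-a + Q, b - 2 * a),
        (-a - Q, b - 2 * a)} : Set (ℤ × ℤ)) := by
    simp only [Set.mem_insert_iff, Set.mem_singleton_iff, Prod.mk.injEq]; omega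
  have e4 : ((-a - P, b - 2 * a - (P - 1)) : ℤ × ℤ) ∉
      ({(-a + Q, b - 2 * a), (-a - Q, b - 2 * a)} : Set (ℤ × ℤ)) := by
    simp only [Set.mem_insert_iff, Set.mem_singleton_iff, Prod.mk.injEq]; omega
  have e5 : ((-a + Q, b - 2 * a) : ℤ × ℤ) ∉ ({(-a - Q, b - 2 * a)} : Set (ℤ × ℤ)) := by
    simp only [Set.mem_singleton_iff, Prod.mk.injEq]; omega
  rw [Set.ncard_insert_of_notMem e1, Set.ncard_insert_of_notMem e2,
    Set.ncard_insert_of_notMem e3, Set.ncard_insert_of_notMem e4,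
    Set.ncard_insert_of_notMem e5, Set.ncard_singleton]
end

section
/- Let a and d be distinct integers with d > a, and consider f(x) = (x + d)²/(x + a). Then the set of integral points (x, y) on the graph of f with y ≥ 1 is exactly the set of pairs (x, y) = (-a + ρ·m², ρ·(m + n)²), where ρ ranges over the positive divisors of d - a, and m, n range over relatively prime positive integers with m·n = (d - a)/ρ. In particular this set is finite. -/
/-!
Put `t = x + a` and `k = d - a`. An integral point with `y ≥ 1` is a solution of
`y * t = (t + k) ^ 2` with `t > 0`, which forces `t ∣ k ^ 2`. Dividing `t` and `k` by their gcd `g`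
gives coprime `m, n` with `m ∣ g`, so `t = ρ m²` and `k = ρ m n` for `ρ = g / m`, and then
`y = ρ (m + n)²`. Finiteness follows because `ρ m n = k` has finitely many positive solutions.
-/

theorem Int.exists_coprime_eq_mul_sq_of_dvd_sq {t k : ℤ} (ht : 0 < t) (hk : 0 < k)
    (hdvd : t ∣ k ^ 2) :
    ∃ ρ m n : ℤ, 0 < ρ ∧ 0 < m ∧ 0 < n ∧ IsCoprime m n ∧ t = ρ * m ^ 2 ∧ k = ρ * (m * n) := by
  obtain ⟨g, u, v, hg, huv, rfl, rfl⟩ :=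
    Int.exists_gcd_one' (Int.gcd_pos_of_ne_zero_left k ht.ne')
  have hg' : (0 : ℤ) < g := by exact_mod_cast hg
  have hu : 0 < u := pos_of_mul_pos_left ht hg'.le
  have hv : 0 < v := pos_of_mul_pos_left hk hg'.le
  have hcop : IsCoprime u v := Int.isCoprime_iff_gcd_eq_one.mpr huv
  have hug : u ∣ g := by
    have : u * g ∣ g * v ^ 2 * g := by convert hdvd using 1; ring
    exact (hcop.pow_right (n := 2)).dvd_of_dvd_mul_right ((mul_dvd_mul_iff_right hg'.ne').mp this)
  obtain ⟨w, hw⟩ := hug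
  have hw0 : 0 < w := pos_of_mul_pos_right (hw ▸ hg') hu.le
  exact ⟨w, u, v, hw0, hu, hv, hcop, by rw [hw]; ring, by rw [hw]; ring⟩

theorem mul_eq_add_sq_iff_exists_coprime {t k y : ℤ} (hk : 0 < k) :
    0 < t ∧ y * t = (t + k) ^ 2 ↔
      ∃ ρ m n : ℤ, 0 < ρ ∧ 0 < m ∧ 0 < n ∧ IsCoprime m n ∧ k = ρ * (m * n) ∧
        t = ρ * m ^ 2 ∧ y = ρ * (m + n) ^ 2 := by
  constructor
  · rintro ⟨ht, hy⟩
    have hdvd : t ∣ k ^ 2 := ⟨y - t - 2 * k, by linear_combination -hy⟩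
    obtain ⟨ρ, m, n, hρ, hm, hn, hcop, rfl, rfl⟩ :=
      Int.exists_coprime_eq_mul_sq_of_dvd_sq ht hk hdvd
    refine ⟨ρ, m, n, hρ, hm, hn, hcop, rfl, rfl, mul_right_cancel₀ ht.ne' ?_⟩
    linear_combination hy
  · rintro ⟨ρ, m, n, hρ, hm, hn, -, rfl, rfl, rfl⟩
    exact ⟨by positivity, by ring⟩

def integralPointsYPos (a d : ℤ) : Set (ℤ × ℤ) :=
  {q | q.1 ≠ -a ∧ (q.2 : ℝ) = ((q.1 : ℝ) + d) ^ 2 / ((q.1 : ℝ) + a) ∧ 1 ≤ q.2}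

theorem mem_integralPointsYPos_iff {a d x y : ℤ} (h : a < d) :
    (x, y) ∈ integralPointsYPos a d ↔ 0 < x + a ∧ y * (x + a) = (x + a + (d - a)) ^ 2 := by
  rw [show x + a + (d - a) = x + d by ring]
  constructor
  · rintro ⟨hx, hy, hy1⟩
    have hxa : (x : ℝ) + a ≠ 0 := by exact_mod_cast (show x + a ≠ 0 by omega)
    have hyZ : y * (x + a) = (x + d) ^ 2 := by
      rw [eq_div_iff hxa] at hy; exact_mod_cast hy
    refine ⟨?_, hyZ⟩
    rcases lt_or_gt_of_ne (show x + a ≠ 0 by omega) with hneg | hpos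
    · nlinarith [sq_nonneg (x + d)]
    · exact hpos
  · rintro ⟨hxa, hyZ⟩
    have hxa' : (x : ℝ) + a ≠ 0 := by exact_mod_cast hxa.ne'
    refine ⟨by omega, ?_, ?_⟩
    · rw [eq_div_iff hxa']; exact_mod_cast hyZ
    · nlinarith [mul_pos hxa hxa]

theorem Int.dvd_and_eq_ediv_iff {ρ k c : ℤ} (hρ : ρ ≠ 0) : ρ ∣ k ∧ c = k / ρ ↔ ρ * c = k :=
  ⟨fun ⟨hdvd, hc⟩ => hc ▸ Int.mul_ediv_cancel' hdvd,
    fun h => ⟨⟨c, h.symm⟩, by rw [← h, Int.mul_ediv_cancel_left _ hρ]⟩⟩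

theorem integralPointsYPos_eq {a d : ℤ} (h : a < d) :
    integralPointsYPos a d =
      {q : ℤ × ℤ | ∃ ρ m n : ℤ, 0 < ρ ∧ ρ ∣ (d - a) ∧ 0 < m ∧ 0 < n ∧
          IsCoprime m n ∧ m * n = (d - a) / ρ ∧ q = (-a + ρ * m ^ 2, ρ * (m + n) ^ 2)} := by
  ext ⟨x, y⟩
  rw [mem_integralPointsYPos_iff h, mul_eq_add_sq_iff_exists_coprime (sub_pos.2 h)]
  simp only [Set.mem_ofPred_eq, Prod.mk.injEq]
  refine exists_congr fun ρ => exists_congr fun m => exists_congr fun n => ?_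
  constructor
  · rintro ⟨hρ, hm, hn, hcop, hk, hx, hy⟩
    obtain ⟨hdvd, hmn⟩ := (Int.dvd_and_eq_ediv_iff hρ.ne').2 hk.symm
    exact ⟨hρ, hdvd, hm, hn, hcop, hmn, by omega, hy⟩
  · rintro ⟨hρ, hdvd, hm, hn, hcop, hmn, hx, hy⟩
    exact ⟨hρ, hm, hn, hcop, ((Int.dvd_and_eq_ediv_iff hρ.ne').1 ⟨hdvd, hmn⟩).symm, by omega, hy⟩

theorem Int.finite_setOf_pos_mul_mul_eq (k : ℤ) :
    {p : ℤ × ℤ × ℤ | 0 < p.1 ∧ 0 < p.2.1 ∧ 0 < p.2.2 ∧ p.1 * (p.2.1 * p.2.2) = k}.Finite := by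
  refine (Set.finite_Icc 1 k |>.prod (Set.finite_Icc 1 k |>.prod (Set.finite_Icc 1 k))).subset ?_
  rintro ⟨ρ, m, n⟩ ⟨hρ, hm, hn, rfl⟩
  have hk : 0 < ρ * (m * n) := by positivity
  exact ⟨⟨hρ, Int.le_of_dvd hk (dvd_mul_right _ _)⟩,
    ⟨hm, Int.le_of_dvd hk (dvd_mul_of_dvd_right (dvd_mul_right _ _))⟩,
    ⟨hn, Int.le_of_dvd hk (dvd_mul_of_dvd_right (dvd_mul_left _ _))⟩⟩

theorem integralPointsYPos_finite {a d : ℤ} (h : a < d) : (integralPointsYPos a d).Finite := by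
  rw [integralPointsYPos_eq h]
  refine ((Int.finite_setOf_pos_mul_mul_eq (d - a)).image
    fun p => (-a + p.1 * p.2.1 ^ 2, p.1 * (p.2.1 + p.2.2) ^ 2)).subset ?_
  rintro _ ⟨ρ, m, n, hρ, hdvd, hm, hn, -, hmn, rfl⟩
  exact ⟨(ρ, m, n), ⟨hρ, hm, hn, (Int.dvd_and_eq_ediv_iff hρ.ne').1 ⟨hdvd, hmn⟩⟩, rfl⟩

/-- For distinct integers `a < d`, the integral points `(x, y)` with `y ≥ 1` on the graph of
`f(x) = (x + d)^2/(x + a)` are exactly the pairs `(-a + ρ*m^2, ρ*(m + n)^2)` where `ρ` is a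
positive divisor of `d - a` and `m, n` are coprime positive integers with `m*n = (d - a)/ρ`.
In particular this set of points is finite. -/
theorem integral_points_y_pos_of_double_root_case
    (a d : ℤ) (h : a < d) :
    ({q : ℤ × ℤ | q.1 ≠ -a ∧
        (q.2 : ℝ) = ((q.1 : ℝ) + (d : ℝ)) ^ 2 / ((q.1 : ℝ) + (a : ℝ)) ∧ 1 ≤ q.2}
      = {q : ℤ × ℤ | ∃ ρ m n : ℤ, 0 < ρ ∧ ρ ∣ (d - a) ∧ 0 < m ∧ 0 < n ∧
          IsCoprime m n ∧ m * n = (d - a) / ρ ∧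
          q = (-a + ρ * m ^ 2, ρ * (m + n) ^ 2)}) ∧
    Set.Finite {q : ℤ × ℤ | q.1 ≠ -a ∧
        (q.2 : ℝ) = ((q.1 : ℝ) + (d : ℝ)) ^ 2 / ((q.1 : ℝ) + (a : ℝ)) ∧ 1 ≤ q.2} :=
  ⟨integralPointsYPos_eq h, integralPointsYPos_finite h⟩
end
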